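/- Let G be a normed gyrogroup. If G contains two nonidentity elements x and y with ‖x‖ ≠ ‖y‖, then the geometry (G, Γ_m) is not n-transitive for all n ≥ 2. -/

import Mathlib

/-!
Every `T = L_a ∘ γ ∈ Γₘ` preserves the gyronorm distance from `T e = a`: since `γ` is a product of
gyrations it preserves `‖·‖` (hence fixes `e`), and `⊖a ⊕ (a ⊕ γ x) = γ x`. So an element of `Γₘ`
sending `e ↦ e` and `x ↦ y` forces `‖x‖ = ‖y‖`. For `n ≥ 2`, the pairs `(e, x)` and `(e, y)` extend
to injective `n`-tuples, and `n`-transitivity would provide such an element.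
-/

/-- A gyrogroup: a set with a binary operation `op`, a left identity `e`, left inverses
`inv`, and gyroautomorphisms `gyr a b` (bijective and operation-preserving) satisfying the
left gyroassociative law and the left loop property. -/
class Gyrogroup (G : Type*) where
  /-- the gyrogroup operation `⊕` -/
  op : G → G → G
  /-- the identity element -/
  e : G
  /-- the inverse `⊖a` -/
  inv : G → G
  /-- (G1) `e ⊕ a = a` -/
  op_e : ∀ a : G, op e a = a
  /-- (G2) `⊖a ⊕ a = e` -/
  op_inv : ∀ a : G, op (inv a) a = e
  /-- the gyroautomorphism `gyr[a, b]` -/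
  gyr : G → G → G → G
  /-- (G3) `gyr[a, b]` is bijective -/
  gyr_bijective : ∀ a b : G, Function.Bijective (gyr a b)
  /-- (G3) `gyr[a, b]` preserves the operation -/
  gyr_op : ∀ a b x y : G, gyr a b (op x y) = op (gyr a b x) (gyr a b y)
  /-- (G3) the left gyroassociative law -/
  gyrassoc : ∀ a b c : G, op a (op b c) = op (op a b) (gyr a b c)
  /-- (G4) the left loop property -/
  loop : ∀ a b : G, gyr (op a b) b = gyr a b

namespace Gyrogroup

variable {G : Type*} [Gyrogroup G]

theorem key (x z : G) : op (inv x) (op x z) = gyr (inv x) x z := by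
  rw [gyrassoc, op_inv, op_e]

theorem L_injective (x : G) : Function.Injective (op x) := by
  intro z₁ z₂ h
  have h1 : gyr (inv x) x z₁ = gyr (inv x) x z₂ := by
    rw [← key, ← key, h]
  exact (gyr_bijective (inv x) x).1 h1

theorem L_surjective (x : G) : Function.Surjective (op x) := by
  intro w
  obtain ⟨z, hz⟩ := (gyr_bijective (inv x) x).2 (op (inv x) w)
  exact ⟨z, L_injective (inv x) (by rw [key, hz])⟩

theorem L_bijective (x : G) : Function.Bijective (op x) :=
  ⟨L_injective x, L_surjective x⟩

/-- The left gyrotranslation `L_a : x ↦ a ⊕ x` as a permutation of `G`. -/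
noncomputable def Lperm (a : G) : Equiv.Perm G := Equiv.ofBijective (op a) (L_bijective a)

/-- The gyroautomorphism `gyr[a, b]` as a permutation of `G`. -/
noncomputable def gyrPerm (a b : G) : Equiv.Perm G := Equiv.ofBijective (gyr a b) (gyr_bijective a b)

/-- `GYR(G)`: the subgroup of `Sym(G)` generated by all gyroautomorphisms. -/
def GYR (G : Type*) [Gyrogroup G] : Subgroup (Equiv.Perm G) :=
  Subgroup.closure {π : Equiv.Perm G | ∃ a b : G, π = gyrPerm a b}

/-- `Γₘ = {L_a ∘ γ : a ∈ G, γ ∈ GYR(G)}`, a subgroup of `Sym(G)`. -/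
def Γm (G : Type*) [Gyrogroup G] : Set (Equiv.Perm G) :=
  {T : Equiv.Perm G | ∃ a : G, ∃ γ ∈ GYR G, T = Lperm a * γ}

end Gyrogroup

/-- The geometry `(S, 𝒯)` is `n`-transitive: `S` has at least `n` distinct elements, and any
`n` pairwise distinct points can be mapped to any `n` pairwise distinct points by a single
transformation of `𝒯`. -/
def IsNTransitive {S : Type*} (𝒯 : Set (Equiv.Perm S)) (n : ℕ) : Prop :=
  (∃ x : Fin n → S, Function.Injective x) ∧
    ∀ x y : Fin n → S, Function.Injective x → Function.Injective y →
      ∃ t ∈ 𝒯, ∀ i, t (x i) = y i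

/-- A normed gyrogroup: a gyrogroup equipped with a gyronorm `‖·‖ : G → ℝ` that is
nonnegative (vanishing exactly at the identity), invariant under taking inverses,
subadditive, and invariant under gyrations. -/
class NormedGyrogroup (G : Type*) extends Gyrogroup G where
  /-- the gyronorm -/
  gnorm : G → ℝ
  gnorm_nonneg : ∀ x : G, 0 ≤ gnorm x
  gnorm_eq_zero_iff : ∀ x : G, gnorm x = 0 ↔ x = e
  gnorm_inv : ∀ x : G, gnorm (inv x) = gnorm x
  gnorm_op_le : ∀ x y : G, gnorm (op x y) ≤ gnorm x + gnorm y
  gnorm_gyr : ∀ a b x : G, gnorm (gyr a b x) = gnorm x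

/-- The gyronorm metric `d_η(x, y) = ‖⊖x ⊕ y‖` of a normed gyrogroup. -/
def dEta {G : Type*} [NormedGyrogroup G] (x y : G) : ℝ :=
  NormedGyrogroup.gnorm (Gyrogroup.op (Gyrogroup.inv x) y)

namespace Gyrogroup

variable {G : Type*} [Gyrogroup G]

theorem gyr_e_left (b c : G) : gyr e b c = c :=
  L_injective b <| by rw [← op_e (op b c), gyrassoc, op_e]

theorem gyr_inv_self (b c : G) : gyr (inv b) b c = c := by
  rw [← loop, op_inv, gyr_e_left]

theorem inv_op_op_cancel (a x : G) : op (inv a) (op a x) = x := by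
  rw [key, gyr_inv_self]

theorem op_e_right (a : G) : op a e = a :=
  L_injective (inv a) <| by rw [inv_op_op_cancel, op_inv]

theorem inv_e : (inv e : G) = e := by
  rw [← op_e_right (inv e), op_inv]

end Gyrogroup

namespace NormedGyrogroup

open Gyrogroup

variable {G : Type*} [NormedGyrogroup G]

theorem gnorm_apply_of_mem_GYR {γ : Equiv.Perm G} (hγ : γ ∈ GYR G) (x : G) :
    gnorm (γ x) = gnorm x := by
  induction hγ using Subgroup.closure_induction generalizing x with
  | mem π hπ =>
    obtain ⟨a, b, rfl⟩ := hπ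
    exact gnorm_gyr a b x
  | one => rfl
  | mul π σ _ _ hπ hσ => rw [Equiv.Perm.mul_apply, hπ, hσ]
  | inv π _ hπ => rw [← hπ, Equiv.Perm.inv_def, Equiv.apply_symm_apply]

theorem apply_e_of_mem_GYR {γ : Equiv.Perm G} (hγ : γ ∈ GYR G) : γ e = e := by
  rw [← gnorm_eq_zero_iff, gnorm_apply_of_mem_GYR hγ, gnorm_eq_zero_iff]

theorem dEta_e_left (x : G) : dEta e x = gnorm x := by
  rw [dEta, inv_e, op_e]

theorem dEta_apply_e_apply_of_mem_Γm {T : Equiv.Perm G} (hT : T ∈ Γm G) (x : G) :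
    dEta (T e) (T x) = gnorm x := by
  obtain ⟨a, γ, hγ, rfl⟩ := hT
  change gnorm (op (inv (op a (γ e))) (op a (γ x))) = gnorm x
  rw [apply_e_of_mem_GYR hγ, op_e_right, inv_op_op_cancel, gnorm_apply_of_mem_GYR hγ]

end NormedGyrogroup

theorem Function.Injective.exists_injective_extend_fin {S : Type*} {m n : ℕ} (hmn : m ≤ n)
    {u : Fin n → S} (hu : Function.Injective u) {w : Fin m → S} (hw : Function.Injective w) :
    ∃ v : Fin n → S, Function.Injective v ∧ ∀ i, v (Fin.castLE hmn i) = w i := by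
  obtain ⟨σ, hσ⟩ := Equiv.Perm.exists_extending_pair (u ∘ Fin.castLE hmn) w
    (hu.comp (Fin.castLE_injective hmn)) hw
  exact ⟨σ ∘ u, σ.injective.comp hu, hσ⟩

open Gyrogroup NormedGyrogroup in
/-- If a normed gyrogroup `G` contains two nonidentity elements of different gyronorms,
then the geometry `(G, Γₘ)` is not `n`-transitive for any `n ≥ 2`. -/
theorem stmt17 {G : Type*} [NormedGyrogroup G]
    (h : ∃ x y : G, x ≠ e ∧ y ≠ e ∧ gnorm x ≠ gnorm y) :
    ∀ n : ℕ, 2 ≤ n → ¬ IsNTransitive (Γm G) n := by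
  obtain ⟨x, y, hx, hy, hxy⟩ := h
  rintro n hn ⟨⟨u, hu⟩, htrans⟩
  obtain ⟨v, hv, hv_pair⟩ := hu.exists_injective_extend_fin hn (injective_pair_iff_ne.mpr hx.symm)
  obtain ⟨w, hw, hw_pair⟩ := hu.exists_injective_extend_fin hn (injective_pair_iff_ne.mpr hy.symm)
  obtain ⟨T, hT, hTvw⟩ := htrans v w hv hw
  have hTe : T e = e := by simpa [hv_pair, hw_pair] using hTvw (Fin.castLE hn 0)
  have hTx : T x = y := by simpa [hv_pair, hw_pair] using hTvw (Fin.castLE hn 1)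
  apply hxy
  rw [← dEta_apply_e_apply_of_mem_Γm hT, hTe, hTx, dEta_e_left]
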